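/- arXiv:2104.08242 — 2 statements merged into one kernel-verified Lean document; each statement's English description precedes it below -/
import Mathlib

section
/- Assume additionally that h_I(θ_s) ≥ 0 for all s ≥ 0. Then for every t ≥ 0 the half-edge balance identity holds: μ θ_t² = μ_R θ_t + μ_I θ_t F(t) + h_S(θ_t) + β α_S θ_t Σ_{k≥2} k(k−1) p_k ∫_0^t θ_s^{k−1} (h_I(θ_s)/h_X(θ_s)) F(t−s) ds, where the series on the right converges. -/
/-! Write `G' x = genFunDeriv p x = ∑ k p_k x^(k-1)`, so that `h_S(θ) = α_S θ G'(θ)`.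
Since `F' = ρ - (β+ρ) F` and `F 0 = 1`, the ODE turns `y = μ θ - μ_R - (μ - μ_R) F` into a
solution of `y' = -(β+ρ) y + β α_S G'(θ)` with `y 0 = 0`, hence
`y t = β α_S ∫₀ᵗ G'(θ_s) e^{-(β+ρ)(t-s)} ds`.
On the other hand `(θ^m)' = -β m θ^m h_I/h_X`, so integrating by parts against `F (t - s)` gives
the `k`-th term of the series as `k p_k/β (F t - θ_t^(k-1) + β ∫₀ᵗ θ_s^(k-1) e^{-(β+ρ)(t-s)} ds)`.
These terms are dominated by `k p_k`; summing them and using `μ_S = α_S ∑ k p_k` reduces the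
identity to `θ_t` times this formula for `y t`. -/

open scoped BigOperators
open Real

noncomputable def vS (αS : ℝ) (p : ℕ → ℝ) (θ : ℝ) : ℝ := αS * ∑' k : ℕ, p k * θ ^ k

noncomputable def hS (αS : ℝ) (p : ℕ → ℝ) (θ : ℝ) : ℝ := αS * ∑' k : ℕ, (k : ℝ) * p k * θ ^ k

noncomputable def hX (μ : ℝ) (θ : ℝ) : ℝ := μ * θ ^ 2

noncomputable def hR (μ μR β ρ : ℝ) (θ : ℝ) : ℝ := μR * θ + μ * ρ / β * (θ * (1 - θ))

noncomputable def hI (αS μ μR β ρ : ℝ) (p : ℕ → ℝ) (θ : ℝ) : ℝ :=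
  hX μ θ - hS αS p θ - hR μ μR β ρ θ

noncomputable def F (β ρ t : ℝ) : ℝ := ρ / (β + ρ) + β / (β + ρ) * Real.exp (-(β + ρ) * t)

open Set MeasureTheory

theorem F_zero {β ρ : ℝ} (h : β + ρ ≠ 0) : F β ρ 0 = 1 := by
  rw [F, mul_zero, exp_zero, mul_one, ← add_div, add_comm, div_self h]

theorem hasDerivAt_F {β ρ : ℝ} (h : β + ρ ≠ 0) (x : ℝ) :
    HasDerivAt (F β ρ) (-β * exp (-(β + ρ) * x)) x := by
  refine ((((hasDerivAt_id' x).const_mul (-(β + ρ))).exp.const_mul (β / (β + ρ))).const_add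
    (ρ / (β + ρ))).congr_deriv ?_
  field_simp

theorem integral_deriv_mul_F_sub {φ φ' : ℝ → ℝ} {β ρ a b : ℝ} (h : β + ρ ≠ 0)
    (hφ : ∀ s ∈ uIcc a b, HasDerivAt φ (φ' s) s) (hφ' : IntervalIntegrable φ' volume a b) :
    ∫ s in a..b, φ' s * F β ρ (b - s) =
      φ b - φ a * F β ρ (b - a) - β * ∫ s in a..b, φ s * exp (-(β + ρ) * (b - s)) := by
  have hv : ∀ s, HasDerivAt (fun s => F β ρ (b - s)) (β * exp (-(β + ρ) * (b - s))) s := by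
    intro s
    refine ((hasDerivAt_F h (b - s)).comp s ((hasDerivAt_id s).const_sub b)).congr_deriv ?_
    ring
  have hparts := intervalIntegral.integral_mul_deriv_eq_deriv_mul hφ (fun s _ => hv s) hφ'
    (by apply Continuous.intervalIntegrable; fun_prop)
  simp only [sub_self, F_zero h, mul_one, mul_left_comm _ β, intervalIntegral.integral_const_mul]
    at hparts
  linarith

theorem eq_exp_mul_add_integral_of_hasDerivAt {y g : ℝ → ℝ} {σ a b : ℝ}
    (hy : ∀ s ∈ uIcc a b, HasDerivAt y (-σ * y s + g s) s) (hg : ContinuousOn g (uIcc a b)) :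
    y b = exp (-σ * (b - a)) * y a + ∫ s in a..b, g s * exp (-σ * (b - s)) := by
  have hd : ∀ s ∈ uIcc a b, HasDerivAt (fun s => exp (σ * s) * y s) (exp (σ * s) * g s) s := by
    intro s hs
    refine (((hasDerivAt_id' s).const_mul σ).exp.mul (hy s hs)).congr_deriv ?_
    ring
  have hint : IntervalIntegrable (fun s => exp (σ * s) * g s) volume a b :=
    ((by fun_prop : Continuous fun s => exp (σ * s)).continuousOn.mul hg).intervalIntegrable
  have hker : ∀ s, g s * exp (-σ * (b - s)) = exp (-σ * b) * (exp (σ * s) * g s) := by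
    intro s
    rw [mul_comm (g s), ← mul_assoc, ← exp_add]
    congr 2
    ring
  have hb : exp (-σ * b) * exp (σ * b) = 1 := by rw [← exp_add, neg_mul, neg_add_cancel, exp_zero]
  have ha : exp (-σ * b) * exp (σ * a) = exp (-σ * (b - a)) := by rw [← exp_add]; ring_nf
  simp only [hker, intervalIntegral.integral_const_mul,
    intervalIntegral.integral_eq_sub_of_hasDerivAt hd hint]
  linear_combination (-y b) * hb + y a * ha

noncomputable def genFunDeriv (p : ℕ → ℝ) (x : ℝ) : ℝ := ∑' k : ℕ, (k : ℝ) * p k * x ^ (k - 1)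

theorem hS_eq_mul_genFunDeriv (αS : ℝ) (p : ℕ → ℝ) (x : ℝ) :
    hS αS p x = αS * x * genFunDeriv p x := by
  rw [hS, genFunDeriv, mul_assoc,
    ← tsum_mul_left (f := fun k : ℕ => (k : ℝ) * p k * x ^ (k - 1))]
  congr 1
  refine tsum_congr fun k => ?_
  rcases k with _ | k
  · simp
  · rw [Nat.add_sub_cancel, pow_succ]
    ring

theorem Ioc_zero_one_subset_Icc : Ioc (0 : ℝ) 1 ⊆ Icc (-1) 1 :=
  Ioc_subset_Icc_self.trans (Icc_subset_Icc (by norm_num) le_rfl)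

theorem norm_mul_pow_le_of_mem_Icc {c x : ℝ} (hx : x ∈ Icc (-1) 1) (n : ℕ) :
    ‖c * x ^ n‖ ≤ ‖c‖ := by
  rw [norm_mul, norm_pow]
  exact mul_le_of_le_one_right (norm_nonneg c)
    (pow_le_one₀ (norm_nonneg x) (abs_le.mpr hx))

theorem hasSum_genFunDeriv {p : ℕ → ℝ} (hp : Summable fun k : ℕ => (k : ℝ) * p k) {x : ℝ}
    (hx : x ∈ Icc (-1) 1) :
    HasSum (fun k : ℕ => (k : ℝ) * p k * x ^ (k - 1)) (genFunDeriv p x) :=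
  (hp.norm.of_norm_bounded fun _ => norm_mul_pow_le_of_mem_Icc hx _).hasSum

theorem continuousOn_genFunDeriv {p : ℕ → ℝ} (hp : Summable fun k : ℕ => (k : ℝ) * p k) :
    ContinuousOn (genFunDeriv p) (Icc (-1) 1) :=
  continuousOn_tsum (fun _ => by fun_prop) hp.norm
    fun _ _ hx => norm_mul_pow_le_of_mem_Icc hx _

theorem hasSum_integral_genFunDeriv_mul {p : ℕ → ℝ} (hp : Summable fun k : ℕ => (k : ℝ) * p k)
    {x w : ℝ → ℝ} {a b : ℝ} (hx : ContinuousOn x (uIcc a b))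
    (hxS : MapsTo x (uIcc a b) (Icc (-1) 1)) (hw : ContinuousOn w (uIcc a b)) :
    HasSum (fun k : ℕ => (k : ℝ) * p k * ∫ s in a..b, x s ^ (k - 1) * w s)
      (∫ s in a..b, genFunDeriv p (x s) * w s) := by
  simp only [← intervalIntegral.integral_const_mul, ← mul_assoc]
  have hsub : uIoc a b ⊆ uIcc a b := uIoc_subset_uIcc
  refine intervalIntegral.hasSum_integral_of_dominated_convergence
    (fun k s => ‖(k : ℝ) * p k‖ * ‖w s‖) (fun _ => ?_) (fun _ => ?_) ?_ ?_ ?_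
  · exact (((continuousOn_const.mul (hx.pow _)).mul hw).mono hsub).aestronglyMeasurable
      measurableSet_uIoc
  · refine ae_of_all _ fun s hs => ?_
    rw [norm_mul]
    exact mul_le_mul_of_nonneg_right (norm_mul_pow_le_of_mem_Icc (hxS (hsub hs)) _)
      (norm_nonneg _)
  · exact ae_of_all _ fun s _ => hp.norm.mul_right _
  · simp only [tsum_mul_right]
    exact (continuousOn_const.mul hw.norm).intervalIntegrable
  · exact ae_of_all _ fun s hs => (hasSum_genFunDeriv hp (hxS (hsub hs))).mul_right _

theorem mul_neg_mul_hI_div_hX {αS μ μR β ρ : ℝ} {p : ℕ → ℝ} {x : ℝ} (hβ : β ≠ 0) (hμ : μ ≠ 0)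
    (hx : x ≠ 0) :
    μ * (-β * x * hI αS μ μR β ρ p x / hX μ x) =
      -(β + ρ) * (μ * x) + β * αS * genFunDeriv p x + β * μR + μ * ρ := by
  rw [hI, hX, hR, hS_eq_mul_genFunDeriv]
  field_simp
  ring

theorem continuousOn_hI_div_hX {αS μ μR β ρ : ℝ} {p : ℕ → ℝ} {θ : ℝ → ℝ} {S : Set ℝ}
    (hp : Summable fun k : ℕ => (k : ℝ) * p k) (hμ : μ ≠ 0) (hθ : ContinuousOn θ S)
    (hθS : MapsTo θ S (Ioc 0 1)) :
    ContinuousOn (fun s => hI αS μ μR β ρ p (θ s) / hX μ (θ s)) S := by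
  have hG : ContinuousOn (fun s => genFunDeriv p (θ s)) S :=
    (continuousOn_genFunDeriv hp).comp hθ (hθS.mono_right Ioc_zero_one_subset_Icc)
  simp only [hI, hX, hR, hS_eq_mul_genFunDeriv]
  exact ContinuousOn.div (by fun_prop) (by fun_prop)
    fun s hs => mul_ne_zero hμ (pow_ne_zero 2 (hθS hs).1.ne')

theorem mul_theta_eq_F_add_integral {αS μ μR β ρ t : ℝ} {p : ℕ → ℝ} {θ : ℝ → ℝ} (hβ : β ≠ 0)
    (hσ : β + ρ ≠ 0) (hμ : μ ≠ 0) (hp : Summable fun k : ℕ => (k : ℝ) * p k) (hθ0 : θ 0 = 1)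
    (hθS : MapsTo θ (uIcc 0 t) (Ioc 0 1))
    (hθ' : ∀ s ∈ uIcc 0 t, HasDerivAt θ (-β * θ s * hI αS μ μR β ρ p (θ s) / hX μ (θ s)) s) :
    μ * θ t = μR + (μ - μR) * F β ρ t +
      β * αS * ∫ s in (0 : ℝ)..t, genFunDeriv p (θ s) * exp (-(β + ρ) * (t - s)) := by
  have hG : ContinuousOn (fun s => genFunDeriv p (θ s)) (uIcc 0 t) :=
    (continuousOn_genFunDeriv hp).comp (HasDerivAt.continuousOn hθ')
      (hθS.mono_right Ioc_zero_one_subset_Icc)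
  have hy : ∀ s ∈ uIcc 0 t, HasDerivAt (fun s => μ * θ s - μR - (μ - μR) * F β ρ s)
      (-(β + ρ) * (μ * θ s - μR - (μ - μR) * F β ρ s) + β * αS * genFunDeriv p (θ s)) s := by
    intro s hs
    refine ((((hθ' s hs).const_mul μ).sub_const μR).sub
      ((hasDerivAt_F hσ s).const_mul (μ - μR))).congr_deriv ?_
    rw [mul_neg_mul_hI_div_hX hβ hμ (hθS hs).1.ne', F]
    field_simp
    ring
  have h := eq_exp_mul_add_integral_of_hasDerivAt hy (hG.const_smul (β * αS))
  simp only [hθ0, F_zero hσ, mul_one, sub_self, sub_zero, mul_zero, zero_add] at h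
  simp only [← intervalIntegral.integral_const_mul, mul_assoc] at h ⊢
  linarith

theorem mul_integral_pow_mul_F_sub {β ρ t : ℝ} {θ u : ℝ → ℝ} (m : ℕ) (hσ : β + ρ ≠ 0)
    (hθ0 : θ 0 = 1) (hθ' : ∀ s ∈ uIcc 0 t, HasDerivAt θ (-β * θ s * u s) s)
    (hu : ContinuousOn u (uIcc 0 t)) :
    β * m * ∫ s in (0 : ℝ)..t, θ s ^ m * u s * F β ρ (t - s) =
      F β ρ t - θ t ^ m + β * ∫ s in (0 : ℝ)..t, θ s ^ m * exp (-(β + ρ) * (t - s)) := by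
  have hφ : ∀ s ∈ uIcc 0 t,
      HasDerivAt (fun s => θ s ^ m) (-(β * m) * (θ s ^ m * u s)) s := by
    intro s hs
    refine ((hθ' s hs).pow m).congr_deriv ?_
    rcases m with _ | n
    · simp
    · rw [Nat.add_sub_cancel, pow_succ]
      push_cast
      ring
  have h := integral_deriv_mul_F_sub hσ hφ
    ((continuousOn_const.mul (((HasDerivAt.continuousOn hθ').pow m).mul hu)).intervalIntegrable)
  simp only [mul_assoc, intervalIntegral.integral_const_mul, hθ0, one_pow, one_mul, sub_zero] at h
  simp only [mul_assoc]
  linarith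

theorem hasSum_mul_integral_pow_mul_F_sub {β ρ t : ℝ} {p : ℕ → ℝ} {θ u : ℝ → ℝ}
    (hp : Summable fun k : ℕ => (k : ℝ) * p k) (hβ : β ≠ 0) (hσ : β + ρ ≠ 0) (hθ0 : θ 0 = 1)
    (hθS : MapsTo θ (uIcc 0 t) (Icc (-1) 1))
    (hθ' : ∀ s ∈ uIcc 0 t, HasDerivAt θ (-β * θ s * u s) s) (hu : ContinuousOn u (uIcc 0 t)) :
    HasSum (fun k : ℕ => (k : ℝ) * ((k : ℝ) - 1) * p k *
        ∫ s in (0 : ℝ)..t, θ s ^ (k - 1) * u s * F β ρ (t - s))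
      (F β ρ t / β * ∑' k : ℕ, (k : ℝ) * p k - 1 / β * genFunDeriv p (θ t) +
        ∫ s in (0 : ℝ)..t, genFunDeriv p (θ s) * exp (-(β + ρ) * (t - s))) := by
  have hterm : ∀ k : ℕ, (k : ℝ) * ((k : ℝ) - 1) * p k *
      ∫ s in (0 : ℝ)..t, θ s ^ (k - 1) * u s * F β ρ (t - s) =
        F β ρ t / β * ((k : ℝ) * p k) - 1 / β * ((k : ℝ) * p k * θ t ^ (k - 1)) +
          (k : ℝ) * p k * ∫ s in (0 : ℝ)..t, θ s ^ (k - 1) * exp (-(β + ρ) * (t - s)) := by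
    rintro (_ | n)
    · simp
    · have h := mul_integral_pow_mul_F_sub n hσ hθ0 hθ' hu
      simp only [Nat.add_sub_cancel]
      push_cast
      linear_combination (norm := skip) (((n : ℝ) + 1) * p (n + 1) / β) * h
      field_simp
      ring
  have h := ((hp.hasSum.mul_left (F β ρ t / β)).sub
    ((hasSum_genFunDeriv hp (hθS right_mem_uIcc)).mul_left (1 / β))).add
    (hasSum_integral_genFunDeriv_mul (w := fun s => exp (-(β + ρ) * (t - s))) hp
      (HasDerivAt.continuousOn hθ') hθS (Continuous.continuousOn (by fun_prop)))
  rw [funext hterm]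
  exact h

theorem stmt4_general
    (β ρ μ μS μI μR αS : ℝ) (p : ℕ → ℝ) (θ : ℝ → ℝ)
    (hβ : 0 < β) (hρ : 0 ≤ ρ) (hμ : 0 < μ)
    (hμsum : μS + μI + μR = μ)
    (hmeanSummable : Summable (fun k : ℕ => (k : ℝ) * p k))
    (hμSdef : μS = αS * ∑' k : ℕ, (k : ℝ) * p k)
    (hθ0 : θ 0 = 1)
    (hθmem : ∀ t, 0 ≤ t → θ t ∈ Set.Ioc (0 : ℝ) 1)
    (hθderiv : ∀ t, 0 ≤ t →
      HasDerivAt θ (-β * θ t * hI αS μ μR β ρ p (θ t) / hX μ (θ t)) t)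
    (t : ℝ) (ht : 0 ≤ t) :
    Summable (fun k : ℕ => (k : ℝ) * ((k : ℝ) - 1) * p k *
      ∫ s in (0 : ℝ)..t,
        θ s ^ (k - 1) * (hI αS μ μR β ρ p (θ s) / hX μ (θ s)) * F β ρ (t - s)) ∧
    μ * θ t ^ 2 = μR * θ t + μI * θ t * F β ρ t + hS αS p (θ t) +
      β * αS * θ t *
        ∑' k : ℕ, (k : ℝ) * ((k : ℝ) - 1) * p k *
          ∫ s in (0 : ℝ)..t,
            θ s ^ (k - 1) * (hI αS μ μR β ρ p (θ s) / hX μ (θ s)) * F β ρ (t - s) := by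
  have hσ : β + ρ ≠ 0 := by positivity
  have hnonneg : ∀ s ∈ uIcc 0 t, 0 ≤ s := fun s hs => (uIcc_of_le ht ▸ hs).1
  have hθS : MapsTo θ (uIcc 0 t) (Ioc 0 1) := fun s hs => hθmem s (hnonneg s hs)
  have hθ' : ∀ s ∈ uIcc 0 t, HasDerivAt θ (-β * θ s * hI αS μ μR β ρ p (θ s) / hX μ (θ s)) s :=
    fun s hs => hθderiv s (hnonneg s hs)
  have hsum := hasSum_mul_integral_pow_mul_F_sub hmeanSummable hβ.ne' hσ hθ0
    (hθS.mono_right Ioc_zero_one_subset_Icc)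
    (fun s hs => (hθ' s hs).congr_deriv (mul_div_assoc _ _ _))
    (continuousOn_hI_div_hX hmeanSummable hμ.ne' (HasDerivAt.continuousOn hθ') hθS)
  refine ⟨hsum.summable, ?_⟩
  rw [hsum.tsum_eq, hS_eq_mul_genFunDeriv]
  have key := mul_theta_eq_F_add_integral hβ.ne' hσ hμ.ne' hmeanSummable hθ0 hθS hθ'
  linear_combination (norm := skip) θ t * key + θ t * F β ρ t * (hμSdef - hμsum)
  field_simp
  ring

theorem stmt4
    (β ρ μ μS μI μR αS : ℝ) (p : ℕ → ℝ) (θ : ℝ → ℝ)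
    (hβ : 0 < β) (hρ : 0 ≤ ρ) (hμ : 0 < μ)
    (hμS : 0 ≤ μS) (hμI : 0 ≤ μI) (hμR : 0 ≤ μR)
    (hμsum : μS + μI + μR = μ)
    (hαS : αS ∈ Set.Ioc (0 : ℝ) 1)
    (hp : ∀ k, 0 ≤ p k)
    (hpsummable : Summable p)
    (hpsum : ∑' k : ℕ, p k = 1)
    (hmeanSummable : Summable (fun k : ℕ => (k : ℝ) * p k))
    (hmeanPos : 0 < ∑' k : ℕ, (k : ℝ) * p k)
    (hμSdef : μS = αS * ∑' k : ℕ, (k : ℝ) * p k)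
    (hθ0 : θ 0 = 1)
    (hθmem : ∀ t, 0 ≤ t → θ t ∈ Set.Ioc (0 : ℝ) 1)
    (hθderiv : ∀ t, 0 ≤ t →
      HasDerivAt θ (-β * θ t * hI αS μ μR β ρ p (θ t) / hX μ (θ t)) t)
    (hIpos : ∀ s, 0 ≤ s → 0 ≤ hI αS μ μR β ρ p (θ s))
    (t : ℝ) (ht : 0 ≤ t) :
    Summable (fun k : ℕ => (k : ℝ) * ((k : ℝ) - 1) * p k *
      ∫ s in (0 : ℝ)..t,
        θ s ^ (k - 1) * (hI αS μ μR β ρ p (θ s) / hX μ (θ s)) * F β ρ (t - s)) ∧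
    μ * θ t ^ 2 = μR * θ t + μI * θ t * F β ρ t + hS αS p (θ t) +
      β * αS * θ t *
        ∑' k : ℕ, (k : ℝ) * ((k : ℝ) - 1) * p k *
          ∫ s in (0 : ℝ)..t,
            θ s ^ (k - 1) * (hI αS μ μR β ρ p (θ s) / hX μ (θ s)) * F β ρ (t - s) :=
  stmt4_general β ρ μ μS μI μR αS p θ hβ hρ hμ hμsum hmeanSummable hμSdef hθ0 hθmem hθderiv t ht
end

section
/- For every t ≥ 0, one has −ρ α_S Σ_{k≥1} k p_k ∫_0^t θ_s^{k−1} e^{−(β+ρ)(t−s)} ds = −(μρ/β) θ_t + (ρ(μ − μ_R)/(β+ρ)) e^{−(β+ρ)t} + (ρ/β)(ρμ/(β+ρ)) + ρ μ_R/(β+ρ), where the series on the left converges. -/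
open scoped BigOperators
open Real

/-! With `G = pgfDeriv p` one has `hS θ = αS θ G(θ)`, so the ODE reads
`θ' + (β + ρ) θ = (β αS G(θ) + β μR + μ ρ) / μ`. Integrating against the factor
`exp (-(β + ρ) (t - s))` over `[0, t]` gives `∫ G(θ s) exp (-(β + ρ) (t - s)) ds` in closed
form, and the series on the left is that integral expanded termwise, by dominated convergence
with the bound `k p k`, since `0 < θ ≤ 1`. -/

noncomputable def pgfDeriv (p : ℕ → ℝ) (x : ℝ) : ℝ := ∑' k : ℕ, (k : ℝ) * p k * x ^ (k - 1)

section PgfDeriv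

variable {p : ℕ → ℝ}

theorem norm_mul_pow_pred_le (hp : ∀ k, 0 ≤ p k) (k : ℕ) {x : ℝ} (hx : |x| ≤ 1) :
    ‖(k : ℝ) * p k * x ^ (k - 1)‖ ≤ (k : ℝ) * p k := by
  have hkp : 0 ≤ (k : ℝ) * p k := mul_nonneg k.cast_nonneg (hp k)
  rw [norm_mul, Real.norm_of_nonneg hkp, norm_pow, Real.norm_eq_abs]
  exact mul_le_of_le_one_right hkp (pow_le_one₀ (abs_nonneg x) hx)

theorem summable_pgfDeriv (hp : ∀ k, 0 ≤ p k) (hmean : Summable fun k : ℕ => (k : ℝ) * p k)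
    {x : ℝ} (hx : |x| ≤ 1) : Summable fun k : ℕ => (k : ℝ) * p k * x ^ (k - 1) :=
  .of_norm_bounded hmean fun k => norm_mul_pow_pred_le hp k hx

theorem continuousOn_pgfDeriv (hp : ∀ k, 0 ≤ p k) (hmean : Summable fun k : ℕ => (k : ℝ) * p k) :
    ContinuousOn (pgfDeriv p) (Set.Icc (-1) 1) :=
  continuousOn_tsum (fun _ => continuousOn_const.mul (continuousOn_pow _)) hmean
    fun k _ hx => norm_mul_pow_pred_le hp k (abs_le.2 hx)

theorem hasSum_mul_intervalIntegral_pow_pred (hp : ∀ k, 0 ≤ p k)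
    (hmean : Summable fun k : ℕ => (k : ℝ) * p k) {g w : ℝ → ℝ} {a b : ℝ}
    (hg : ContinuousOn g (Set.uIcc a b)) (hg1 : Set.MapsTo g (Set.uIcc a b) (Set.Icc (-1) 1))
    (hw : ContinuousOn w (Set.uIcc a b)) :
    HasSum (fun k : ℕ => (k : ℝ) * p k * ∫ s in a..b, g s ^ (k - 1) * w s)
      (∫ s in a..b, pgfDeriv p (g s) * w s) := by
  simp_rw [← intervalIntegral.integral_const_mul]
  refine intervalIntegral.hasSum_integral_of_dominated_convergence
    (fun k s => (k : ℝ) * p k * |w s|) (fun k => ?_) (fun k => ?_)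
    (.of_forall fun s _ => hmean.mul_right _) ?_ (.of_forall fun s hs => ?_)
  · exact ContinuousOn.aestronglyMeasurable
      ((continuousOn_const.mul ((hg.pow _).mul hw)).mono Set.uIoc_subset_uIcc) measurableSet_uIoc
  · refine .of_forall fun s hs => ?_
    have hs := Set.uIoc_subset_uIcc hs
    rw [← mul_assoc, norm_mul, Real.norm_eq_abs (w s)]
    exact mul_le_mul_of_nonneg_right (norm_mul_pow_pred_le hp k (abs_le.2 (hg1 hs)))
      (abs_nonneg _)
  · simp_rw [tsum_mul_right]
    exact (continuousOn_const.mul hw.abs).intervalIntegrable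
  · simp_rw [← mul_assoc]
    have hs := Set.uIoc_subset_uIcc hs
    exact (summable_pgfDeriv hp hmean (abs_le.2 (hg1 hs))).hasSum.mul_right _

theorem hS_eq_mul_pgfDeriv (αS : ℝ) (p : ℕ → ℝ) (x : ℝ) : hS αS p x = αS * (x * pgfDeriv p x) := by
  rw [hS, pgfDeriv, ← tsum_mul_left (a := x)]
  congr 1
  refine tsum_congr fun k => ?_
  cases k with
  | zero => simp
  | succ n => rw [Nat.add_sub_cancel, pow_succ]; ring

end PgfDeriv

theorem integral_deriv_add_mul_mul_exp {f f' : ℝ → ℝ} {a b : ℝ} (c : ℝ)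
    (hf : ∀ s ∈ Set.uIcc a b, HasDerivAt f (f' s) s)
    (hf' : IntervalIntegrable f' MeasureTheory.volume a b) :
    ∫ s in a..b, (f' s + c * f s) * exp (-c * (b - s)) = f b - f a * exp (-c * (b - a)) := by
  have hexp : ∀ s, HasDerivAt (fun s => exp (-c * (b - s))) (exp (-c * (b - s)) * c) s := by
    intro s
    simpa using ((hasDerivAt_id s).const_sub b |>.const_mul (-c)).exp
  have hfc : ContinuousOn f (Set.uIcc a b) := fun s hs => (hf s hs).continuousAt.continuousWithinAt
  rw [intervalIntegral.integral_eq_sub_of_hasDerivAt (f := fun s => f s * exp (-c * (b - s)))]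
  · simp
  · exact fun s hs => ((hf s hs).mul (hexp s)).congr_deriv (by ring)
  · exact (hf'.add (hfc.const_smul c).intervalIntegrable).mul_continuousOn
      (by fun_prop : Continuous fun s => exp (-c * (b - s))).continuousOn

theorem neg_mul_mul_hI_div_hX_add {αS μ μR β ρ x : ℝ} (p : ℕ → ℝ) (hβ : β ≠ 0) (hμ : μ ≠ 0)
    (hx : x ≠ 0) :
    -β * x * hI αS μ μR β ρ p x / hX μ x + (β + ρ) * x =
      (β * αS * pgfDeriv p x + β * μR + μ * ρ) / μ := by
  rw [hI, hX, hS_eq_mul_pgfDeriv, hR]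
  field_simp
  ring

section Model

variable {β ρ μ μR αS : ℝ} {p : ℕ → ℝ} {θ : ℝ → ℝ}

theorem integral_pgfDeriv_comp_mul_exp (hβ : 0 < β) (hρ : 0 ≤ ρ) (hμ : 0 < μ)
    (hp : ∀ k, 0 ≤ p k) (hmean : Summable fun k : ℕ => (k : ℝ) * p k) (hθ0 : θ 0 = 1)
    (hθmem : ∀ t, 0 ≤ t → θ t ∈ Set.Ioc (0 : ℝ) 1)
    (hθderiv : ∀ t, 0 ≤ t →
      HasDerivAt θ (-β * θ t * hI αS μ μR β ρ p (θ t) / hX μ (θ t)) t)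
    {t : ℝ} (ht : 0 ≤ t) :
    β * αS / μ * ∫ s in (0 : ℝ)..t, pgfDeriv p (θ s) * exp (-(β + ρ) * (t - s)) =
      θ t - (β * μR + μ * ρ) / (μ * (β + ρ)) -
        (1 - (β * μR + μ * ρ) / (μ * (β + ρ))) * exp (-(β + ρ) * t) := by
  set c := β + ρ
  set K := (β * μR + μ * ρ) / (μ * c)
  have hc : c ≠ 0 := by positivity
  have hnonneg : ∀ s ∈ Set.uIcc 0 t, 0 ≤ s := fun s hs => (Set.uIcc_of_le ht ▸ hs).1
  have hθcont : ContinuousOn θ (Set.uIcc 0 t) := fun s hs =>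
    (hθderiv s (hnonneg s hs)).continuousAt.continuousWithinAt
  have hGθcont : ContinuousOn (fun s => pgfDeriv p (θ s)) (Set.uIcc 0 t) :=
    (continuousOn_pgfDeriv hp hmean).comp hθcont fun s hs =>
      Set.Ioc_subset_Icc_self.trans (Set.Icc_subset_Icc_left (by norm_num))
        (hθmem s (hnonneg s hs))
  have hderiv : ∀ s ∈ Set.uIcc 0 t, HasDerivAt (fun s => θ s - K)
      ((β * αS * pgfDeriv p (θ s) + β * μR + μ * ρ) / μ - c * θ s) s := fun s hs =>
    ((hθderiv s (hnonneg s hs)).sub_const K).congr_deriv <| eq_sub_of_add_eq <|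
      neg_mul_mul_hI_div_hX_add p hβ.ne' hμ.ne' (hθmem s (hnonneg s hs)).1.ne'
  have hderivInt : IntervalIntegrable
      (fun s => (β * αS * pgfDeriv p (θ s) + β * μR + μ * ρ) / μ - c * θ s)
      MeasureTheory.volume 0 t :=
    ((((continuousOn_const.mul hGθcont).add continuousOn_const).add continuousOn_const).div_const _
      |>.sub (continuousOn_const.mul hθcont)).intervalIntegrable
  have h := integral_deriv_add_mul_mul_exp c hderiv hderivInt
  rw [hθ0, sub_zero] at h
  rw [← h, ← intervalIntegral.integral_const_mul]
  congr 1
  ext s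
  simp only [K]
  field_simp
  ring

end Model

theorem stmt6_general
    (β ρ μ μR αS : ℝ) (p : ℕ → ℝ) (θ : ℝ → ℝ)
    (hβ : 0 < β) (hρ : 0 ≤ ρ) (hμ : 0 < μ)
    (hp : ∀ k, 0 ≤ p k)
    (hmeanSummable : Summable (fun k : ℕ => (k : ℝ) * p k))
    (hθ0 : θ 0 = 1)
    (hθmem : ∀ t, 0 ≤ t → θ t ∈ Set.Ioc (0 : ℝ) 1)
    (hθderiv : ∀ t, 0 ≤ t →
      HasDerivAt θ (-β * θ t * hI αS μ μR β ρ p (θ t) / hX μ (θ t)) t)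
    (t : ℝ) (ht : 0 ≤ t) :
    Summable (fun k : ℕ => (k : ℝ) * p k *
      ∫ s in (0 : ℝ)..t, θ s ^ (k - 1) * Real.exp (-(β + ρ) * (t - s))) ∧
    -(ρ * αS) * ∑' k : ℕ, (k : ℝ) * p k *
        ∫ s in (0 : ℝ)..t, θ s ^ (k - 1) * Real.exp (-(β + ρ) * (t - s)) =
      -(μ * ρ / β) * θ t + ρ * (μ - μR) / (β + ρ) * Real.exp (-(β + ρ) * t) +
        ρ / β * (ρ * μ / (β + ρ)) + ρ * μR / (β + ρ) := by
  have hnonneg : ∀ s ∈ Set.uIcc 0 t, 0 ≤ s := fun s hs => (Set.uIcc_of_le ht ▸ hs).1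
  have hsum := hasSum_mul_intervalIntegral_pow_pred hp hmeanSummable
    (fun s hs => (hθderiv s (hnonneg s hs)).continuousAt.continuousWithinAt)
    (fun s hs => Set.Ioc_subset_Icc_self.trans (Set.Icc_subset_Icc_left (by norm_num))
      (hθmem s (hnonneg s hs)))
    (by fun_prop : Continuous fun s => exp (-(β + ρ) * (t - s))).continuousOn
  refine ⟨hsum.summable, ?_⟩
  have hintegral := integral_pgfDeriv_comp_mul_exp hβ hρ hμ hp hmeanSummable hθ0 hθmem hθderiv ht
  have hscale : ∀ I : ℝ, -(ρ * αS) * I = -(μ * ρ / β) * (β * αS / μ * I) := fun I => by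
    field_simp
  have hc : β + ρ ≠ 0 := by positivity
  rw [hsum.tsum_eq, hscale, hintegral]
  field_simp
  ring

theorem stmt6
    (β ρ μ μS μI μR αS : ℝ) (p : ℕ → ℝ) (θ : ℝ → ℝ)
    (hβ : 0 < β) (hρ : 0 ≤ ρ) (hμ : 0 < μ)
    (hμS : 0 ≤ μS) (hμI : 0 ≤ μI) (hμR : 0 ≤ μR)
    (hμsum : μS + μI + μR = μ)
    (hαS : αS ∈ Set.Ioc (0 : ℝ) 1)
    (hp : ∀ k, 0 ≤ p k)
    (hpsummable : Summable p)
    (hpsum : ∑' k : ℕ, p k = 1)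
    (hmeanSummable : Summable (fun k : ℕ => (k : ℝ) * p k))
    (hmeanPos : 0 < ∑' k : ℕ, (k : ℝ) * p k)
    (hμSdef : μS = αS * ∑' k : ℕ, (k : ℝ) * p k)
    (hθ0 : θ 0 = 1)
    (hθmem : ∀ t, 0 ≤ t → θ t ∈ Set.Ioc (0 : ℝ) 1)
    (hθderiv : ∀ t, 0 ≤ t →
      HasDerivAt θ (-β * θ t * hI αS μ μR β ρ p (θ t) / hX μ (θ t)) t)
    (t : ℝ) (ht : 0 ≤ t) :
    Summable (fun k : ℕ => (k : ℝ) * p k *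
      ∫ s in (0 : ℝ)..t, θ s ^ (k - 1) * Real.exp (-(β + ρ) * (t - s))) ∧
    -(ρ * αS) * ∑' k : ℕ, (k : ℝ) * p k *
        ∫ s in (0 : ℝ)..t, θ s ^ (k - 1) * Real.exp (-(β + ρ) * (t - s)) =
      -(μ * ρ / β) * θ t + ρ * (μ - μR) / (β + ρ) * Real.exp (-(β + ρ) * t) +
        ρ / β * (ρ * μ / (β + ρ)) + ρ * μR / (β + ρ) :=
  stmt6_general β ρ μ μR αS p θ hβ hρ hμ hp hmeanSummable hθ0 hθmem hθderiv t ht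
end
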